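/- Let u : ℝ² → ℝ be a C³ solution of u_yy = (u_y + 2x)·u_xx + (y − u_x)·u_xy − u_x. Then the function v(x,y) := y² − 2x + 2y·u_x − 2u_y satisfies the linearized equation v_yy = (u_y + 2x)·v_xx + u_xx·v_y + (y − u_x)·v_xy − (u_xy + 1)·v_x at every point of ℝ². -/

import Mathlib

/-- Partial derivative of `f : ℝ² → ℝ` in the direction `v`. -/
noncomputable def pd2 (v : ℝ × ℝ) (f : ℝ × ℝ → ℝ) : ℝ × ℝ → ℝ :=
  fun p => fderiv ℝ f p v

noncomputable def dx : (ℝ × ℝ → ℝ) → ℝ × ℝ → ℝ := pd2 (1, 0)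
noncomputable def dy : (ℝ × ℝ → ℝ) → ℝ × ℝ → ℝ := pd2 (0, 1)

/-!
Write `R u` for the difference of the two sides of equation (3). For every `C³` function `u`,
differentiating `γ₋₁` and `R u` and using that mixed partials of `u` up to order three commute
gives the identity `L_u γ₋₁ = 2y · ∂ₓ(R u) - 2 · ∂_y(R u)` for the linearized operator
`L_u`.
On a solution `R u` vanishes identically, hence so do its derivatives.
-/

section Calculus

variable {f g : ℝ × ℝ → ℝ} {v w p : ℝ × ℝ}

theorem pd2_const (c : ℝ) : pd2 w (fun _ => c) p = 0 := by
  simp [pd2]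

theorem pd2_zero : pd2 w 0 = 0 := by
  funext p
  simp [pd2]

theorem pd2_fst : pd2 w (fun q => q.1) p = w.1 := by
  simp [pd2, fderiv_fst]

theorem pd2_snd : pd2 w (fun q => q.2) p = w.2 := by
  simp [pd2, fderiv_snd]

theorem pd2_fun_add (hf : DifferentiableAt ℝ f p) (hg : DifferentiableAt ℝ g p) :
    pd2 w (fun q => f q + g q) p = pd2 w f p + pd2 w g p := by
  simp [pd2, fderiv_fun_add hf hg]

theorem pd2_fun_sub (hf : DifferentiableAt ℝ f p) (hg : DifferentiableAt ℝ g p) :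
    pd2 w (fun q => f q - g q) p = pd2 w f p - pd2 w g p := by
  simp [pd2, fderiv_fun_sub hf hg]

theorem pd2_fun_mul (hf : DifferentiableAt ℝ f p) (hg : DifferentiableAt ℝ g p) :
    pd2 w (fun q => f q * g q) p = pd2 w f p * g p + f p * pd2 w g p := by
  simp [pd2, fderiv_fun_mul hf hg]
  ring

theorem pd2_fun_pow (hf : DifferentiableAt ℝ f p) (n : ℕ) :
    pd2 w (fun q => f q ^ n) p = n * f p ^ (n - 1) * pd2 w f p := by
  simp [pd2, fderiv_fun_pow n hf]

theorem pd2_pd2 (hf : DifferentiableAt ℝ (fderiv ℝ f) p) :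
    pd2 w (pd2 v f) p = fderiv ℝ (fderiv ℝ f) p w v := by
  change fderiv ℝ (fun q => fderiv ℝ f q v) p w = _
  rw [fderiv_clm_apply hf (differentiableAt_const v)]
  simp

theorem pd2_comm (hf : ContDiff ℝ 2 f) : pd2 w (pd2 v f) = pd2 v (pd2 w f) := by
  have hd : Differentiable ℝ (fderiv ℝ f) :=
    (hf.fderiv_right (m := 1) le_rfl).differentiable one_ne_zero
  funext p
  rw [pd2_pd2 (hd p), pd2_pd2 (hd p), (hf.contDiffAt.isSymmSndFDerivAt (by simp)).eq]

theorem ContDiff.pd2 {n : WithTop ℕ∞} (hf : ContDiff ℝ (n + 1) f) :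
    ContDiff ℝ n (pd2 w f) :=
  (hf.fderiv_right le_rfl).clm_apply contDiff_const

end Calculus

noncomputable def mikhalevResidual (u : ℝ × ℝ → ℝ) : ℝ × ℝ → ℝ := fun p =>
  dy (dy u) p - ((dy u p + 2 * p.1) * dx (dx u) p + (p.2 - dx u p) * dx (dy u) p - dx u p)

noncomputable def mikhalevLinearization (u v : ℝ × ℝ → ℝ) : ℝ × ℝ → ℝ := fun p =>
  dy (dy v) p - ((dy u p + 2 * p.1) * dx (dx v) p + dx (dx u) p * dy v p
    + (p.2 - dx u p) * dx (dy v) p - (dx (dy u) p + 1) * dx v p)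

noncomputable def gammaNegOne (u : ℝ × ℝ → ℝ) : ℝ × ℝ → ℝ := fun q =>
  q.2 ^ 2 - 2 * q.1 + 2 * q.2 * dx u q - 2 * dy u q

section Symmetry

variable {u : ℝ × ℝ → ℝ}

theorem dx_gammaNegOne (hu : ContDiff ℝ 2 u) :
    dx (gammaNegOne u) = fun q => 2 * q.2 * dx (dx u) q - 2 * dx (dy u) q - 2 := by
  have hd : ∀ w, Differentiable ℝ (pd2 w u) :=
    fun w => (hu.pd2 (n := 1)).differentiable one_ne_zero
  funext q
  unfold gammaNegOne
  simp only [dx, dy]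
  simp (disch := fun_prop) only [pd2_fun_add, pd2_fun_sub, pd2_fun_mul, pd2_fun_pow, pd2_fst,
    pd2_snd, pd2_const]
  ring

theorem dy_gammaNegOne (hu : ContDiff ℝ 2 u) :
    dy (gammaNegOne u)
      = fun q => 2 * q.2 + 2 * dx u q + 2 * q.2 * dx (dy u) q - 2 * dy (dy u) q := by
  have hd : ∀ w, Differentiable ℝ (pd2 w u) :=
    fun w => (hu.pd2 (n := 1)).differentiable one_ne_zero
  have hc : dy (dx u) = dx (dy u) := pd2_comm hu
  funext q
  unfold gammaNegOne
  simp only [dx, dy] at hc ⊢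
  simp (disch := fun_prop) only [pd2_fun_add, pd2_fun_sub, pd2_fun_mul, pd2_fun_pow, pd2_fst,
    pd2_snd, pd2_const, hc]
  ring

theorem mikhalevLinearization_gammaNegOne (hu : ContDiff ℝ 3 u) (p : ℝ × ℝ) :
    mikhalevLinearization u (gammaNegOne u) p
      = 2 * p.2 * dx (mikhalevResidual u) p - 2 * dy (mikhalevResidual u) p := by
  have hu2 : ContDiff ℝ 2 u := hu.of_le (by norm_num)
  have hd1 : ∀ w, Differentiable ℝ (pd2 w u) :=
    fun w => (hu.pd2 (n := 2)).differentiable two_ne_zero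
  have hd2 : ∀ v w, Differentiable ℝ (pd2 w (pd2 v u)) :=
    fun v w => ((hu.pd2 (n := 2)).pd2 (n := 1)).differentiable one_ne_zero
  have c1 : dy (dx u) = dx (dy u) := pd2_comm hu2
  have c2 : dy (dx (dy u)) = dx (dy (dy u)) := pd2_comm (hu.pd2 (n := 2))
  have c3 : dy (dx (dx u)) = dx (dx (dy u)) := by
    rw [← c1]
    exact pd2_comm (hu.pd2 (n := 2))
  unfold mikhalevResidual
  simp only [mikhalevLinearization, dx_gammaNegOne hu2, dy_gammaNegOne hu2]
  simp only [dx, dy] at c1 c2 c3 ⊢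
  simp (disch := fun_prop) only [pd2_fun_add, pd2_fun_sub, pd2_fun_mul, pd2_fst, pd2_snd,
    pd2_const, c1, c2, c3]
  ring

end Symmetry

theorem gamma_m1_is_symmetry (u : ℝ × ℝ → ℝ) (hu : ContDiff ℝ 3 u)
    (heq : ∀ p : ℝ × ℝ,
      dy (dy u) p = (dy u p + 2 * p.1) * dx (dx u) p
        + (p.2 - dx u p) * dx (dy u) p - dx u p) :
    ∀ p : ℝ × ℝ,
      (fun v : ℝ × ℝ → ℝ =>
        dy (dy v) p = (dy u p + 2 * p.1) * dx (dx v) p + dx (dx u) p * dy v p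
          + (p.2 - dx u p) * dx (dy v) p - (dx (dy u) p + 1) * dx v p)
      (fun q => q.2 ^ 2 - 2 * q.1 + 2 * q.2 * dx u q - 2 * dy u q) := by
  intro p
  have hR : mikhalevResidual u = 0 := funext fun q => sub_eq_zero.mpr (heq q)
  refine sub_eq_zero.mp ?_
  change mikhalevLinearization u (gammaNegOne u) p = 0
  simp [mikhalevLinearization_gammaNegOne hu, hR, dx, dy, pd2_zero]
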